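/- For every unitary operator g on H and all trace-class operators x₃, x on H, one has Π_r(g)(x₃, x) = −Im Tr( x · g p_{u₂}(g⁻¹ p_{b₂⁺}(x₃) g) g⁻¹ ). In other words, the interior product of Π_r(g) with x₃ is represented by the bounded skew-hermitian operator −g p_{u₂}(g⁻¹ p_{b₂⁺}(x₃) g) g⁻¹ via the pairing (a, b) ↦ Im Tr(ab). -/

import Mathlib

/-!
Write `ω(X, Y) = Im Tr(X Y)` on Hilbert–Schmidt operators. It is symmetric, and it vanishes on
`u₂ × u₂` (then `(X Y)* = Y X`, so the trace is real) and on `b₂⁺ × b₂⁺` (the diagonal of a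
product of upper triangular operators is the product of the real diagonals). Put
`A = g⁻¹ p_{b₂⁺}(x₃) g`, `B = g⁻¹ p_{b₂⁺}(x) g`, `C = g⁻¹ x g`. The two sides become
`ω(p_{b₂⁺} A, p_{u₂} B)` and `-ω(p_{b₂⁺} C, p_{u₂} A)`, and `p_{b₂⁺} C = p_{b₂⁺} B` because
`C - B = g⁻¹ p_{u₂}(x) g` is skew-hermitian and `u₂ ∩ b₂⁺ = 0`. Finally
`0 = ω(p_{b₂⁺} x, p_{b₂⁺} x₃) = ω(A, B) = ω(p_{b₂⁺} A, p_{u₂} B) + ω(p_{b₂⁺} B, p_{u₂} A)`.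
-/

/- Setting: `H` is a separable complex Hilbert space with a fixed orthonormal
(Hilbert) basis `e` indexed by `ℤ`. -/

set_option synthInstance.maxHeartbeats 1000000
set_option maxHeartbeats 2000000

noncomputable section
open ContinuousLinearMap

namespace PL

variable {H : Type*} [NormedAddCommGroup H] [InnerProductSpace ℂ H] [CompleteSpace H]

/-- `A` is a bounded skew-hermitian operator: `A* = -A`. -/
def SkewHerm (A : H →L[ℂ] H) : Prop := star A = -A

/-- `A` is Hilbert–Schmidt: `∑ₙ ‖A eₙ‖² < ∞` (computed in the orthonormal basis `e`;
this is equivalent to the basis-free notion). -/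
def IsHS (e : HilbertBasis ℤ ℂ H) (A : H →L[ℂ] H) : Prop :=
  Summable (fun n : ℤ => ‖A (e n)‖ ^ 2)

/-- The Hilbert–Schmidt norm `‖A‖₂`. -/
def hsNorm (e : HilbertBasis ℤ ℂ H) (A : H →L[ℂ] H) : ℝ :=
  Real.sqrt (∑' n : ℤ, ‖A (e n)‖ ^ 2)

/-- The absolute value `|A| = √(A* A)` of a bounded operator, via the continuous
functional calculus. -/
def absCLM (A : H →L[ℂ] H) : H →L[ℂ] H := CFC.sqrt (star A * A)

/-- `A` is trace class: `Tr |A| = ∑ₙ ⟨eₙ, |A| eₙ⟩ < ∞`. -/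
def IsTC (e : HilbertBasis ℤ ℂ H) (A : H →L[ℂ] H) : Prop :=
  Summable (fun n : ℤ => (inner ℂ (e n) (absCLM A (e n)) : ℂ).re)

/-- The trace norm `‖A‖₁ = Tr |A|`. -/
def traceNorm (e : HilbertBasis ℤ ℂ H) (A : H →L[ℂ] H) : ℝ :=
  ∑' n : ℤ, (inner ℂ (e n) (absCLM A (e n)) : ℂ).re

/-- The trace of a (trace-class) operator: `Tr A = ∑ₙ ⟨eₙ, A eₙ⟩`. -/
def traceOp (e : HilbertBasis ℤ ℂ H) (A : H →L[ℂ] H) : ℂ :=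
  ∑' n : ℤ, (inner ℂ (e n) (A (e n)) : ℂ)

/-- `A` is upper triangular: `⟨eₘ, A eₙ⟩ = 0` whenever `m < n`. -/
def UpperTri (e : HilbertBasis ℤ ℂ H) (A : H →L[ℂ] H) : Prop :=
  ∀ m n : ℤ, m < n → (inner ℂ (e m) (A (e n)) : ℂ) = 0

/-- All diagonal entries `⟨eₙ, A eₙ⟩` of `A` are real. -/
def RealDiag (e : HilbertBasis ℤ ℂ H) (A : H →L[ℂ] H) : Prop :=
  ∀ n : ℤ, (inner ℂ (e n) (A (e n)) : ℂ).im = 0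

/-- Membership in `b₁⁺(H)`: trace-class, upper triangular, real diagonal. -/
def InB1 (e : HilbertBasis ℤ ℂ H) (A : H →L[ℂ] H) : Prop :=
  IsTC e A ∧ UpperTri e A ∧ RealDiag e A

/-- Membership in `u₁(H)`: trace-class and skew-hermitian. -/
def InU1 (e : HilbertBasis ℤ ℂ H) (A : H →L[ℂ] H) : Prop :=
  IsTC e A ∧ SkewHerm A

/-- Membership in `b₂⁺(H)`: Hilbert–Schmidt, upper triangular, real diagonal. -/
def InB2 (e : HilbertBasis ℤ ℂ H) (A : H →L[ℂ] H) : Prop :=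
  IsHS e A ∧ UpperTri e A ∧ RealDiag e A

/-- Membership in `u₂(H)`: Hilbert–Schmidt and skew-hermitian. -/
def InU2 (e : HilbertBasis ℤ ℂ H) (A : H →L[ℂ] H) : Prop :=
  IsHS e A ∧ SkewHerm A

/-- Given projection maps `pu`, `pb` realizing `L₂(H) = u₂(H) ⊕ b₂⁺(H)`, and a
unitary `g` (so `g⁻¹ = g*`), the bilinear map
`Π_r(g)(x₁, x₂) = Im Tr((g⁻¹ p_{b₂⁺}(x₁) g) · p_{u₂}(g⁻¹ p_{b₂⁺}(x₂) g))`. -/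
def Pir (e : HilbertBasis ℤ ℂ H) (pu pb : (H →L[ℂ] H) → (H →L[ℂ] H))
    (g x₁ x₂ : H →L[ℂ] H) : ℝ :=
  (traceOp e ((star g * pb x₁ * g) * pu (star g * pb x₂ * g))).im

open scoped InnerProductSpace ComplexConjugate

theorem _root_.HilbertBasis.hasSum_norm_inner_sq {ι 𝕜 E : Type*} [RCLike 𝕜]
    [NormedAddCommGroup E] [InnerProductSpace 𝕜 E] (b : HilbertBasis ι 𝕜 E) (x : E) :
    HasSum (fun i => ‖⟪b i, x⟫_𝕜‖ ^ 2) (‖x‖ ^ 2) := by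
  have h := (b.hasSum_inner_mul_inner x x).mapL RCLike.reCLM
  simp only [RCLike.reCLM_apply, inner_self_eq_norm_sq] at h
  refine h.congr_fun fun i => ?_
  rw [← inner_conj_symm, RCLike.mul_conj, RCLike.norm_conj, ← RCLike.ofReal_pow, RCLike.ofReal_re]

variable {e : HilbertBasis ℤ ℂ H}

omit [CompleteSpace H] in
variable (e) in
lemma eq_zero_of_forall_inner_apply_eq_zero (T : H →L[ℂ] H)
    (h : ∀ m n : ℤ, ⟪e m, T (e n)⟫_ℂ = 0) : T = 0 := by
  have hbasis : ∀ n, T (e n) = 0 := fun n => by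
    have := e.hasSum_norm_inner_sq (T (e n))
    simp only [h, norm_zero, ne_eq, OfNat.ofNat_ne_zero, not_false_eq_true, zero_pow] at this
    simpa using (hasSum_zero.unique this).symm
  refine ContinuousLinearMap.ext_on
    (Submodule.dense_iff_topologicalClosure_eq_top.mpr e.dense_span) ?_
  rintro _ ⟨n, rfl⟩
  simpa using hbasis n

lemma inner_star_apply (X : H →L[ℂ] H) (x y : H) :
    ⟪x, star X y⟫_ℂ = conj ⟪y, X x⟫_ℂ := by
  rw [star_eq_adjoint, adjoint_inner_right, inner_conj_symm]

omit [CompleteSpace H] in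
variable (e) in
lemma isHS_iff_summable_inner_sq (X : H →L[ℂ] H) :
    IsHS e X ↔ Summable fun p : ℤ × ℤ => ‖⟪e p.2, X (e p.1)⟫_ℂ‖ ^ 2 := by
  rw [summable_prod_of_nonneg fun _ => sq_nonneg _, IsHS]
  simp only [fun n => (e.hasSum_norm_inner_sq (X (e n))).tsum_eq,
    fun n => (e.hasSum_norm_inner_sq (X (e n))).summable, implies_true, true_and]

lemma IsHS.star {X : H →L[ℂ] H} (hX : IsHS e X) : IsHS e (star X) := by
  rw [isHS_iff_summable_inner_sq] at hX ⊢
  refine (hX.prod_symm).congr fun p => ?_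
  simp only [Prod.fst_swap, Prod.snd_swap, inner_star_apply, RCLike.norm_conj]

omit [CompleteSpace H] in
lemma IsHS.mul_left {X : H →L[ℂ] H} (hX : IsHS e X) (Y : H →L[ℂ] H) : IsHS e (Y * X) :=
  (Summable.mul_left (‖Y‖ ^ 2) hX).of_nonneg_of_le (fun _ => sq_nonneg _) fun n => by
    rw [← mul_pow]
    exact pow_le_pow_left₀ (norm_nonneg _) (Y.le_opNorm _) 2

lemma IsHS.mul_right {X : H →L[ℂ] H} (hX : IsHS e X) (Y : H →L[ℂ] H) : IsHS e (X * Y) := by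
  simpa using (hX.star.mul_left (Star.star Y)).star

lemma norm_apply_sq_eq_re_inner_star_mul (A : H →L[ℂ] H) (ξ : H) :
    ‖A ξ‖ ^ 2 = (⟪ξ, (star A * A) ξ⟫_ℂ).re :=
  A.apply_norm_sq_eq_inner_adjoint_right ξ

lemma norm_sqrt_apply_sq {T : H →L[ℂ] H} (hT : 0 ≤ T) (ξ : H) :
    ‖CFC.sqrt T ξ‖ ^ 2 = (⟪ξ, T ξ⟫_ℂ).re := by
  rw [norm_apply_sq_eq_re_inner_star_mul, (CFC.sqrt_nonneg T).isSelfAdjoint.star_eq,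
    CFC.sqrt_mul_sqrt_self T hT]

lemma norm_absCLM_apply_sq (A : H →L[ℂ] H) (ξ : H) : ‖absCLM A ξ‖ ^ 2 = ‖A ξ‖ ^ 2 := by
  rw [absCLM, norm_sqrt_apply_sq (star_mul_self_nonneg A), norm_apply_sq_eq_re_inner_star_mul]

lemma IsTC.isHS {A : H →L[ℂ] H} (hA : IsTC e A) : IsHS e A := by
  set S := CFC.sqrt (absCLM A)
  refine (Summable.mul_left (‖S‖ ^ 2) hA).of_nonneg_of_le (fun _ => sq_nonneg _) fun n => ?_
  have hS : absCLM A (e n) = S (S (e n)) := by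
    rw [← CFC.sqrt_mul_sqrt_self (absCLM A) (CFC.sqrt_nonneg _)]
    rfl
  rw [← norm_sqrt_apply_sq (CFC.sqrt_nonneg _), ← norm_absCLM_apply_sq, hS, ← mul_pow]
  exact pow_le_pow_left₀ (norm_nonneg _) (S.le_opNorm _) 2

omit [CompleteSpace H] in
lemma summable_inner_mul_inner_of_isHS {X Y : H →L[ℂ] H} (hX : IsHS e X) (hY : IsHS e Y) :
    Summable fun p : ℤ × ℤ => ⟪e p.1, X (e p.2)⟫_ℂ * ⟪e p.2, Y (e p.1)⟫_ℂ := by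
  have hX' : Summable fun p : ℤ × ℤ => ‖⟪e p.1, X (e p.2)⟫_ℂ‖ ^ 2 :=
    ((isHS_iff_summable_inner_sq e X).mp hX).prod_symm
  have hY' := (isHS_iff_summable_inner_sq e Y).mp hY
  refine .of_norm_bounded ((hX'.add hY').div_const 2) fun p => ?_
  rw [norm_mul]
  nlinarith [two_mul_le_add_sq ‖⟪e p.1, X (e p.2)⟫_ℂ‖ ‖⟪e p.2, Y (e p.1)⟫_ℂ‖]

variable (e) in
lemma inner_mul_apply_eq_tsum (X Y : H →L[ℂ] H) (x y : H) :
    ⟪x, (X * Y) y⟫_ℂ = ∑' m, ⟪x, X (e m)⟫_ℂ * ⟪e m, Y y⟫_ℂ := by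
  have h := e.tsum_inner_mul_inner (adjoint X x) (Y y)
  simp only [adjoint_inner_left] at h
  exact h.symm

lemma hasSum_inner_mul_apply_self {X Y : H →L[ℂ] H} (hX : IsHS e X) (hY : IsHS e Y) :
    HasSum (fun n => ⟪e n, (X * Y) (e n)⟫_ℂ)
      (∑' p : ℤ × ℤ, ⟪e p.1, X (e p.2)⟫_ℂ * ⟪e p.2, Y (e p.1)⟫_ℂ) := by
  have hsum := summable_inner_mul_inner_of_isHS hX hY
  simp only [inner_mul_apply_eq_tsum e]
  exact hsum.hasSum.prod_fiberwise fun n => (hsum.prod_factor n).hasSum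

lemma traceOp_mul_comm {X Y : H →L[ℂ] H} (hX : IsHS e X) (hY : IsHS e Y) :
    traceOp e (X * Y) = traceOp e (Y * X) := by
  rw [traceOp, traceOp, (hasSum_inner_mul_apply_self hX hY).tsum_eq,
    (hasSum_inner_mul_apply_self hY hX).tsum_eq, ← (Equiv.prodComm ℤ ℤ).tsum_eq]
  simp only [Equiv.prodComm_apply, Prod.fst_swap, Prod.snd_swap, mul_comm]

omit [CompleteSpace H] in
lemma traceOp_add {X Y : H →L[ℂ] H} (hX : Summable fun n => ⟪e n, X (e n)⟫_ℂ)
    (hY : Summable fun n => ⟪e n, Y (e n)⟫_ℂ) :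
    traceOp e (X + Y) = traceOp e X + traceOp e Y := by
  simp only [traceOp, add_apply, inner_add_right, hX.tsum_add hY]

lemma traceOp_add_mul {X X' Y : H →L[ℂ] H} (hX : IsHS e X) (hX' : IsHS e X') (hY : IsHS e Y) :
    traceOp e ((X + X') * Y) = traceOp e (X * Y) + traceOp e (X' * Y) := by
  rw [add_mul, traceOp_add (hasSum_inner_mul_apply_self hX hY).summable
    (hasSum_inner_mul_apply_self hX' hY).summable]

lemma traceOp_mul_add {X Y Y' : H →L[ℂ] H} (hX : IsHS e X) (hY : IsHS e Y) (hY' : IsHS e Y') :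
    traceOp e (X * (Y + Y')) = traceOp e (X * Y) + traceOp e (X * Y') := by
  rw [mul_add, traceOp_add (hasSum_inner_mul_apply_self hX hY).summable
    (hasSum_inner_mul_apply_self hX hY').summable]

lemma traceOp_star (X : H →L[ℂ] H) : traceOp e (star X) = conj (traceOp e X) := by
  simp only [traceOp, inner_star_apply, Complex.conj_tsum]

lemma im_traceOp_mul_eq_zero_of_skewHerm {X Y : H →L[ℂ] H} (hX : IsHS e X) (hY : IsHS e Y)
    (sX : SkewHerm X) (sY : SkewHerm Y) : (traceOp e (X * Y)).im = 0 := by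
  rw [← Complex.conj_eq_iff_im, ← traceOp_star, star_mul, sX, sY, neg_mul_neg,
    traceOp_mul_comm hY hX]

lemma im_traceOp_mul_eq_zero_of_upperTri {X Y : H →L[ℂ] H} (hX : IsHS e X) (hY : IsHS e Y)
    (tX : UpperTri e X) (dX : RealDiag e X) (tY : UpperTri e Y) (dY : RealDiag e Y) :
    (traceOp e (X * Y)).im = 0 := by
  have hdiag : ∀ n, (⟪e n, (X * Y) (e n)⟫_ℂ).im = 0 := fun n => by
    rw [inner_mul_apply_eq_tsum e, tsum_eq_single n fun m hm => ?_, Complex.mul_im, dX n, dY n]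
    · simp
    rcases hm.lt_or_gt with h | h
    · rw [tY m n h, mul_zero]
    · rw [tX n m h, zero_mul]
  rw [traceOp, Complex.im_tsum (hasSum_inner_mul_apply_self hX hY).summable]
  simp only [hdiag, tsum_zero]

lemma SkewHerm.conj {u : H →L[ℂ] H} (hu : SkewHerm u) (a : H →L[ℂ] H) :
    SkewHerm (a * u * star a) := by
  rw [SkewHerm, star_mul, star_mul, star_star, hu, neg_mul, mul_neg, mul_assoc]

lemma SkewHerm.sub {u v : H →L[ℂ] H} (hu : SkewHerm u) (hv : SkewHerm v) : SkewHerm (u - v) := by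
  rw [SkewHerm, star_sub, hu, hv, neg_sub_neg, neg_sub]

omit [CompleteSpace H] in
lemma UpperTri.sub {X Y : H →L[ℂ] H} (hX : UpperTri e X) (hY : UpperTri e Y) :
    UpperTri e (X - Y) := fun m n h => by
  rw [sub_apply, inner_sub_right, hX m n h, hY m n h, sub_zero]

omit [CompleteSpace H] in
lemma RealDiag.sub {X Y : H →L[ℂ] H} (hX : RealDiag e X) (hY : RealDiag e Y) :
    RealDiag e (X - Y) := fun n => by
  rw [sub_apply, inner_sub_right, Complex.sub_im, hX n, hY n, sub_zero]

lemma SkewHerm.eq_zero_of_upperTri {T : H →L[ℂ] H} (sT : SkewHerm T) (tT : UpperTri e T)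
    (dT : RealDiag e T) : T = 0 := by
  have hentry : ∀ m n, ⟪e m, T (e n)⟫_ℂ = -conj ⟪e n, T (e m)⟫_ℂ := fun m n => by
    rw [← map_neg, ← inner_neg_right, ← neg_apply, ← sT, inner_star_apply, RCLike.conj_conj]
  refine eq_zero_of_forall_inner_apply_eq_zero e T fun m n => ?_
  rcases lt_trichotomy m n with h | rfl | h
  · exact tT m n h
  · refine Complex.ext ?_ (dT m)
    have := congrArg Complex.re (hentry m m)
    rw [Complex.neg_re, Complex.conj_re] at this
    simp only [Complex.zero_re]
    linarith
  · rw [hentry, tT n m h, map_zero, neg_zero]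

lemma traceOp_mul_conj {X P : H →L[ℂ] H} (hX : IsHS e X) (hP : IsHS e P) (g : H →L[ℂ] H) :
    traceOp e (X * (g * P * star g)) = traceOp e ((star g * X * g) * P) := by
  calc traceOp e (X * (g * P * star g)) = traceOp e ((X * g) * (P * star g)) := by
        simp only [mul_assoc]
    _ = traceOp e (P * (star g * X * g)) := by
        rw [traceOp_mul_comm (hX.mul_right g) (hP.mul_right _)]
        simp only [mul_assoc]
    _ = traceOp e ((star g * X * g) * P) :=
        traceOp_mul_comm hP ((hX.mul_left _).mul_right g)

lemma traceOp_conj_mul_conj {g : H →L[ℂ] H} (hg : g * star g = 1) {X Y : H →L[ℂ] H}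
    (hX : IsHS e X) (hY : IsHS e Y) :
    traceOp e ((star g * X * g) * (star g * Y * g)) = traceOp e (Y * X) := by
  calc traceOp e ((star g * X * g) * (star g * Y * g))
      = traceOp e ((star g * X) * (Y * g)) := by
        simp only [mul_assoc, ← mul_assoc g, hg, one_mul]
    _ = traceOp e (Y * X) := by
        rw [traceOp_mul_comm (hX.mul_left _) (hY.mul_right g)]
        simp only [mul_assoc, ← mul_assoc g, hg, one_mul]

variable (e) in
def IsSplitting (pu pb : (H →L[ℂ] H) → (H →L[ℂ] H)) : Prop :=
  ∀ x : H →L[ℂ] H, IsHS e x → InU2 e (pu x) ∧ InB2 e (pb x) ∧ pu x + pb x = x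

namespace IsSplitting

variable {pu pb : (H →L[ℂ] H) → (H →L[ℂ] H)} (hsplit : IsSplitting e pu pb)
  {X Y : H →L[ℂ] H}

include hsplit in
lemma pb_eq_of_skewHerm_sub (hX : IsHS e X) (hY : IsHS e Y) (h : SkewHerm (X - Y)) :
    pb X = pb Y := by
  obtain ⟨⟨-, suX⟩, ⟨-, tX, dX⟩, hsumX⟩ := hsplit X hX
  obtain ⟨⟨-, suY⟩, ⟨-, tY, dY⟩, hsumY⟩ := hsplit Y hY
  have hdiff : pb X - pb Y = (X - Y) - (pu X - pu Y) := by
    rw [← congrArg₂ (· - ·) hsumX hsumY]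
    abel
  rw [← sub_eq_zero]
  exact (hdiff ▸ h.sub (suX.sub suY)).eq_zero_of_upperTri (tX.sub tY) (dX.sub dY)

include hsplit in
lemma im_traceOp_mul_pu (hX : IsHS e X) (hY : IsHS e Y) :
    (traceOp e (X * pu Y)).im = (traceOp e (pb X * pu Y)).im := by
  obtain ⟨⟨huX, suX⟩, ⟨hbX, -⟩, hsumX⟩ := hsplit X hX
  obtain ⟨⟨huY, suY⟩, -⟩ := hsplit Y hY
  have h := traceOp_add_mul huX hbX huY
  rw [hsumX] at h
  rw [h, Complex.add_im, im_traceOp_mul_eq_zero_of_skewHerm huX huY suX suY, zero_add]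

include hsplit in
lemma im_traceOp_mul (hX : IsHS e X) (hY : IsHS e Y) :
    (traceOp e (X * Y)).im = (traceOp e (pb X * pu Y)).im + (traceOp e (pb Y * pu X)).im := by
  obtain ⟨⟨huX, -⟩, ⟨hbX, tX, dX⟩, hsumX⟩ := hsplit X hX
  obtain ⟨⟨huY, -⟩, ⟨hbY, tY, dY⟩, hsumY⟩ := hsplit Y hY
  have hXY := traceOp_mul_add hX huY hbY
  have hbYX := traceOp_mul_add hbY huX hbX
  rw [hsumY] at hXY
  rw [hsumX] at hbYX
  rw [hXY, Complex.add_im, hsplit.im_traceOp_mul_pu hX hY, traceOp_mul_comm hX hbY, hbYX,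
    Complex.add_im, im_traceOp_mul_eq_zero_of_upperTri hbY hbX tY dY tX dX, add_zero]

end IsSplitting

/-- for every unitary `g` and trace-class `x₃, x`,
`Π_r(g)(x₃, x) = −Im Tr(x · g p_{u₂}(g⁻¹ p_{b₂⁺}(x₃) g) g⁻¹)`; that is, the interior
product of `Π_r(g)` with `x₃` is represented by the bounded skew-hermitian operator
`−g p_{u₂}(g⁻¹ p_{b₂⁺}(x₃) g) g⁻¹` via the pairing `(a, b) ↦ Im Tr(a b)`. -/
theorem statement_14 {H : Type*} [NormedAddCommGroup H] [InnerProductSpace ℂ H]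
    [CompleteSpace H] (e : HilbertBasis ℤ ℂ H)
    (pu pb : (H →L[ℂ] H) → (H →L[ℂ] H))
    (hdec : ∀ x : H →L[ℂ] H, IsHS e x →
      InU2 e (pu x) ∧ InB2 e (pb x) ∧ pu x + pb x = x)
    (g : H →L[ℂ] H) (hg : g ∈ unitary (H →L[ℂ] H))
    (x₃ x : H →L[ℂ] H) (hx₃ : IsTC e x₃) (hx : IsTC e x) :
    Pir e pu pb g x₃ x =
      - (traceOp e (x * (g * pu (star g * pb x₃ * g) * star g))).im ∧
    SkewHerm (g * pu (star g * pb x₃ * g) * star g) := by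
  obtain ⟨-, hgg⟩ := Unitary.mem_iff.mp hg
  have hsplit : IsSplitting e pu pb := hdec
  obtain ⟨-, ⟨hb₃, t₃, d₃⟩, -⟩ := hsplit x₃ hx₃.isHS
  obtain ⟨⟨-, sux⟩, ⟨hb, t, d⟩, hsum⟩ := hsplit x hx.isHS
  set A := star g * pb x₃ * g
  set B := star g * pb x * g
  set C := star g * x * g
  have hA : IsHS e A := (hb₃.mul_left _).mul_right g
  have hB : IsHS e B := (hb.mul_left _).mul_right g
  have hC : IsHS e C := (hx.isHS.mul_left _).mul_right g
  obtain ⟨⟨huA, suA⟩, -⟩ := hsplit A hA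
  have hCB : pb C = pb B := hsplit.pb_eq_of_skewHerm_sub hC hB <| by
    simpa [C, B, ← sub_mul, ← mul_sub, ← eq_sub_of_add_eq hsum] using sux.conj (star g)
  have hAB : (traceOp e (A * B)).im = 0 := by
    rw [traceOp_conj_mul_conj hgg hb₃ hb]
    exact im_traceOp_mul_eq_zero_of_upperTri hb hb₃ t d t₃ d₃
  refine ⟨?_, suA.conj g⟩
  calc Pir e pu pb g x₃ x = (traceOp e (pb A * pu B)).im := hsplit.im_traceOp_mul_pu hA hB
    _ = -(traceOp e (pb B * pu A)).im := by linarith [hsplit.im_traceOp_mul hA hB]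
    _ = -(traceOp e (C * pu A)).im := by rw [hsplit.im_traceOp_mul_pu hC hA, hCB]
    _ = _ := by rw [traceOp_mul_conj hx.isHS huA]

end PL
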